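/- With the map of the previous statement: if γ_{N+1} ≥ γ_A ⊕ γ_A for some CM γ_A, then γ_N ≥ γ_A ⊕ γ_B, where γ_B := B_N − C_Nᵀ (A_N − γ_A)⁻ C_N, and moreover γ_B is itself a CM (i.e., γ_B is real symmetric with γ_B ≥ iJ_m). -/

import Mathlib

open Matrix
open scoped Classical ComplexOrder

noncomputable section

/-- Embed a real matrix into the complex matrices. -/
def toC {k l : ℕ} (A : Matrix (Fin k) (Fin l) ℝ) : Matrix (Fin k) (Fin l) ℂ :=
  A.map Complex.ofReal

/-- The standard symplectic form `Jₙ = ⊕ₖ [[0,-1],[1,0]]` on `ℝ^{2n}`. -/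
def J (n : ℕ) : Matrix (Fin (2*n)) (Fin (2*n)) ℝ :=
  Matrix.of fun i j =>
    if i.val + 1 = j.val ∧ i.val % 2 = 0 then -1
    else if j.val + 1 = i.val ∧ j.val % 2 = 0 then 1 else 0

/-- A correlation matrix (CM): a real symmetric `2n×2n` matrix with `γ - iJₙ ≥ 0`. -/
def IsCM {n : ℕ} (γ : Matrix (Fin (2*n)) (Fin (2*n)) ℝ) : Prop :=
  γ.IsSymm ∧ (toC γ - Complex.I • toC (J n)).PosSemidef

/-- The operator norm (largest singular value) of a real matrix. -/
def opNorm {n m : ℕ} (C : Matrix (Fin n) (Fin m) ℝ) : ℝ :=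
  ‖(Matrix.toEuclideanLin (𝕜 := ℝ) C).toContinuousLinearMap‖

/-- The trace norm (sum of singular values) of a real square matrix. -/
def trNorm {k : ℕ} (A : Matrix (Fin k) (Fin k) ℝ) : ℝ :=
  ((Matrix.posSemidef_conjTranspose_mul_self A).1.eigenvectorUnitary.1 *
    diagonal ((fun x : ℝ => (x : ℝ)) ∘ (√·) ∘ (Matrix.posSemidef_conjTranspose_mul_self A).1.eigenvalues) *
    (star (Matrix.posSemidef_conjTranspose_mul_self A).1.eigenvectorUnitary : Matrix (Fin k) (Fin k) ℝ)).trace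

/-- The trace norm of a complex square matrix. -/
def trNormC {k : ℕ} (A : Matrix (Fin k) (Fin k) ℂ) : ℝ :=
  (((Matrix.posSemidef_conjTranspose_mul_self A).1.eigenvectorUnitary.1 *
    diagonal ((fun x : ℝ => (x : ℂ)) ∘ (√·) ∘ (Matrix.posSemidef_conjTranspose_mul_self A).1.eigenvalues) *
    (star (Matrix.posSemidef_conjTranspose_mul_self A).1.eigenvectorUnitary : Matrix (Fin k) (Fin k) ℂ)).trace).re

/-- The Moore–Penrose pseudoinverse of a real matrix. -/
def pinvR {n m : ℕ} (A : Matrix (Fin n) (Fin m) ℝ) : Matrix (Fin m) (Fin n) ℝ :=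
  if h : ∃ B : Matrix (Fin m) (Fin n) ℝ,
      A * B * A = A ∧ B * A * B = B ∧ (A * B)ᵀ = A * B ∧ (B * A)ᵀ = B * A
  then h.choose else 0

/-- The Moore–Penrose pseudoinverse of a complex matrix. -/
def pinvC {n m : ℕ} (A : Matrix (Fin n) (Fin m) ℂ) : Matrix (Fin m) (Fin n) ℂ :=
  if h : ∃ B : Matrix (Fin m) (Fin n) ℂ,
      A * B * A = A ∧ B * A * B = B ∧ (A * B)ᴴ = A * B ∧ (B * A)ᴴ = B * A
  then h.choose else 0

/-- Real part of a complex matrix. -/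
def reM {k l : ℕ} (X : Matrix (Fin k) (Fin l) ℂ) : Matrix (Fin k) (Fin l) ℝ :=
  Matrix.of fun i j => (X i j).re

/-- Imaginary part of a complex matrix. -/
def imM {k l : ℕ} (X : Matrix (Fin k) (Fin l) ℂ) : Matrix (Fin k) (Fin l) ℝ :=
  Matrix.of fun i j => (X i j).im

/-- `X = C (B − iJₘ)⁻ Cᵀ` appearing in the nonlinear map. -/
def Xmap {n m : ℕ} (B : Matrix (Fin (2*m)) (Fin (2*m)) ℝ)
    (C : Matrix (Fin (2*n)) (Fin (2*m)) ℝ) : Matrix (Fin (2*n)) (Fin (2*n)) ℂ :=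
  toC C * pinvC (toC B - Complex.I • toC (J m)) * toC Cᵀ

/-- `A_{N+1} = A_N − Re(X_N)`. -/
def nextA {n m : ℕ} (A : Matrix (Fin (2*n)) (Fin (2*n)) ℝ)
    (B : Matrix (Fin (2*m)) (Fin (2*m)) ℝ) (C : Matrix (Fin (2*n)) (Fin (2*m)) ℝ) :
    Matrix (Fin (2*n)) (Fin (2*n)) ℝ :=
  A - reM (Xmap B C)

/-- `C_{N+1} = −Im(X_N)`. -/
def nextC {n m : ℕ} (B : Matrix (Fin (2*m)) (Fin (2*m)) ℝ)
    (C : Matrix (Fin (2*n)) (Fin (2*m)) ℝ) : Matrix (Fin (2*n)) (Fin (2*n)) ℝ :=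
  - imM (Xmap B C)

/-- CM predicate for a bipartite block-indexed real matrix, w.r.t. `Jₙ ⊕ Jₘ`. -/
def IsCM2 {n m : ℕ} (γ : Matrix (Fin (2*n) ⊕ Fin (2*m)) (Fin (2*n) ⊕ Fin (2*m)) ℝ) : Prop :=
  γ.IsSymm ∧ (γ.map Complex.ofReal -
    Complex.I • (fromBlocks (J n) 0 0 (J m)).map Complex.ofReal).PosSemidef

/-- Separability of a bipartite CM: `γ ≥ γ_A ⊕ γ_B` for some CMs `γ_A, γ_B`. -/
def SepCM {n m : ℕ} (γ : Matrix (Fin (2*n) ⊕ Fin (2*m)) (Fin (2*n) ⊕ Fin (2*m)) ℝ) : Prop :=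
  ∃ (γA : Matrix (Fin (2*n)) (Fin (2*n)) ℝ) (γB : Matrix (Fin (2*m)) (Fin (2*m)) ℝ),
    IsCM γA ∧ IsCM γB ∧ (γ - fromBlocks γA 0 0 γB).PosSemidef

/-- The block matrix `[[A, C],[Cᵀ, A]]` built from the pair `(A, C)`. -/
def γmat {n : ℕ} (p : Matrix (Fin (2*n)) (Fin (2*n)) ℝ × Matrix (Fin (2*n)) (Fin (2*n)) ℝ) :
    Matrix (Fin (2*n) ⊕ Fin (2*n)) (Fin (2*n) ⊕ Fin (2*n)) ℝ :=
  fromBlocks p.1 p.2 p.2ᵀ p.1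

/-- The iterated sequence: `seq A0 B0 C0 N = (A_{N+1}, C_{N+1})`; the map gives `0`
whenever the current matrix is not a CM. -/
def seq {n m : ℕ} (A0 : Matrix (Fin (2*n)) (Fin (2*n)) ℝ)
    (B0 : Matrix (Fin (2*m)) (Fin (2*m)) ℝ) (C0 : Matrix (Fin (2*n)) (Fin (2*m)) ℝ) :
    ℕ → Matrix (Fin (2*n)) (Fin (2*n)) ℝ × Matrix (Fin (2*n)) (Fin (2*n)) ℝ
  | 0 => if IsCM2 (fromBlocks A0 C0 C0ᵀ B0) then (nextA A0 B0 C0, nextC B0 C0) else (0, 0)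
  | (N+1) => if IsCM2 (γmat (seq A0 B0 C0 N)) then
      (nextA (seq A0 B0 C0 N).1 (seq A0 B0 C0 N).1 (seq A0 B0 C0 N).2,
       nextC (seq A0 B0 C0 N).1 (seq A0 B0 C0 N).2)
    else (0, 0)

/-!
Write `Bₕ = B_N − iJ_m`, so that `X_N = C_N Bₕ⁻ C_Nᵀ`. A real block matrix `[[M, K], [Kᵀ, M]]` with
`K` antisymmetric is `≥ 0` only if `M + iK ≥ 0`; applied to `γ_{N+1} − γ_A ⊕ γ_A` this says
`A_N − γ_A ≥ X_N`, i.e. `A_N − γ_A` dominates the Schur complement of `Bₕ` in `γ_N − iJ`.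
Hence `[[A_N − γ_A, C_N], [C_Nᵀ, Bₕ]] ≥ 0`. Its Schur complement with respect to the other
block, `Bₕ − C_Nᵀ (A_N − γ_A)⁻ C_N = γ_B − iJ_m`, is then `≥ 0`, and so is the remainder
`[[A_N − γ_A, C_N], [C_Nᵀ, C_Nᵀ (A_N − γ_A)⁻ C_N]] = γ_N − γ_A ⊕ γ_B`. Schur complements may be
taken with pseudoinverses because the off-diagonal block of a positive semidefinite block matrix
maps into the range of each diagonal block.
-/

namespace Matrix

section MoorePenrose

variable {α : Type*} {l m n : Type*} [Fintype m] [Fintype n]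

section StarRing

variable [CommSemiring α] [StarRing α]

def IsMoorePenroseInverse (A : Matrix m n α) (B : Matrix n m α) : Prop :=
  A * B * A = A ∧ B * A * B = B ∧ (A * B)ᴴ = A * B ∧ (B * A)ᴴ = B * A

theorem IsMoorePenroseInverse.eq {A : Matrix m n α} {B C : Matrix n m α}
    (hB : IsMoorePenroseInverse A B) (hC : IsMoorePenroseInverse A C) : B = C := by
  obtain ⟨hB₁, hB₂, hB₃, hB₄⟩ := hB
  obtain ⟨hC₁, hC₂, hC₃, hC₄⟩ := hC
  have hAB : A * B = A * C := calc
    A * B = (A * C * (A * B))ᴴ := by rw [← Matrix.mul_assoc, hC₁, hB₃]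
    _ = A * B * (A * C) := by rw [conjTranspose_mul, hB₃, hC₃]
    _ = A * C := by rw [← Matrix.mul_assoc, hB₁]
  have hBA : B * A = C * A := calc
    B * A = (B * A * (C * A))ᴴ := by
      rw [Matrix.mul_assoc B, ← Matrix.mul_assoc A, hC₁, hB₄]
    _ = C * A * (B * A) := by rw [conjTranspose_mul, hB₄, hC₄]
    _ = C * A := by rw [Matrix.mul_assoc C, ← Matrix.mul_assoc A, hB₁]
  calc B = B * A * B := hB₂.symm
    _ = C * A * C := by rw [hBA, Matrix.mul_assoc, hAB, ← Matrix.mul_assoc]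
    _ = C := hC₂

theorem IsMoorePenroseInverse.conjTranspose {A : Matrix m n α} {B : Matrix n m α}
    (h : IsMoorePenroseInverse A B) : IsMoorePenroseInverse Aᴴ Bᴴ := by
  obtain ⟨h₁, h₂, h₃, h₄⟩ := h
  refine ⟨?_, ?_, ?_, ?_⟩
  · rw [Matrix.mul_assoc, ← conjTranspose_mul, ← conjTranspose_mul, h₁]
  · rw [Matrix.mul_assoc, ← conjTranspose_mul, ← conjTranspose_mul, h₂]
  · rw [← conjTranspose_mul, h₄, h₄]
  · rw [← conjTranspose_mul, h₃, h₃]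

theorem IsMoorePenroseInverse.isHermitian {A : Matrix n n α} {B : Matrix n n α}
    (hA : A.IsHermitian) (h : IsMoorePenroseInverse A B) : B.IsHermitian :=
  (hA.eq ▸ h.conjTranspose).eq h

theorem isMoorePenroseInverse_iff_transpose [TrivialStar α] {A : Matrix m n α}
    {B : Matrix n m α} : IsMoorePenroseInverse A B ↔
      A * B * A = A ∧ B * A * B = B ∧ (A * B)ᵀ = A * B ∧ (B * A)ᵀ = B * A := by
  simp only [IsMoorePenroseInverse, conjTranspose_eq_transpose_of_trivial]

end StarRing

theorem IsHermitian.exists_isMoorePenroseInverse {𝕜 : Type*} [RCLike 𝕜] [DecidableEq n]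
    {A : Matrix n n 𝕜} (hA : A.IsHermitian) : ∃ B, IsMoorePenroseInverse A B := by
  have hcont (f : ℝ → ℝ) : ContinuousOn f (spectrum ℝ A) :=
    A.finite_real_spectrum.continuousOn f
  have hself (f : ℝ → ℝ) : (cfc f A)ᴴ = cfc f A := cfc_predicate f A
  have hmul (f g : ℝ → ℝ) : cfc f A * cfc g A = cfc (fun x => f x * g x) A :=
    (cfc_mul f g A (hcont f) (hcont g)).symm
  -- `x ↦ x⁻¹` with `0⁻¹ = 0` inverts `A` on its range and kills its kernel.
  have key : IsMoorePenroseInverse (cfc (id : ℝ → ℝ) A) (cfc (fun x : ℝ => x⁻¹) A) := by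
    refine ⟨?_, ?_, ?_, ?_⟩ <;> simp only [hmul, hself]
    · exact cfc_congr fun x _ => mul_inv_mul_cancel x
    · exact cfc_congr fun x _ => by simpa using mul_inv_mul_cancel x⁻¹
  exact ⟨_, cfc_id ℝ A hA.isSelfAdjoint ▸ key⟩

theorem mul_mul_eq_of_mulVec_eq_zero [Ring α] [DecidableEq n] [Fintype l] {A : Matrix m n α}
    {P : Matrix n m α} {D : Matrix l n α} (hAPA : A * P * A = A)
    (hker : ∀ v, A *ᵥ v = 0 → D *ᵥ v = 0) : D * P * A = D := by
  refine ext_of_mulVec_single fun i => ?_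
  have h := hker (Pi.single i 1 - (P * A) *ᵥ Pi.single i 1) (by
    rw [mulVec_sub, mulVec_mulVec, ← Matrix.mul_assoc, hAPA, sub_self])
  rw [mulVec_sub, mulVec_mulVec, ← Matrix.mul_assoc, sub_eq_zero] at h
  exact h.symm

end MoorePenrose

section Blocks

variable {𝕜 : Type*} {m n : Type*} [RCLike 𝕜]
  {A : Matrix m m 𝕜} {B : Matrix n n 𝕜} {C : Matrix m n 𝕜} {P : Matrix m m 𝕜}

theorem posSemidef_fromBlocks_comm {D : Matrix n m 𝕜} :
    (fromBlocks A C D B).PosSemidef ↔ (fromBlocks B D C A).PosSemidef := by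
  rw [← posSemidef_submatrix_equiv (Equiv.sumComm n m), Equiv.sumComm_apply,
    fromBlocks_submatrix_sum_swap_sum_swap]

theorem PosSemidef.of_fromBlocks₁₁ {D : Matrix n m 𝕜} (h : (fromBlocks A C D B).PosSemidef) :
    A.PosSemidef :=
  h.submatrix Sum.inl

theorem PosSemidef.of_fromBlocks₂₂ {D : Matrix n m 𝕜} (h : (fromBlocks A C D B).PosSemidef) :
    B.PosSemidef :=
  h.submatrix Sum.inr

variable [Fintype m] [Fintype n]

theorem posSemidef_fromBlocks_zero_iff :
    (fromBlocks A 0 0 B).PosSemidef ↔ A.PosSemidef ∧ B.PosSemidef := by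
  refine ⟨fun h => ⟨h.of_fromBlocks₁₁, h.of_fromBlocks₂₂⟩,
    fun ⟨hA, hB⟩ => .of_dotProduct_mulVec_nonneg ?_ fun x => ?_⟩
  · simp [IsHermitian, fromBlocks_conjTranspose, hA.isHermitian.eq, hB.isHermitian.eq]
  · rw [← Sum.elim_comp_inl_inr x, fromBlocks_mulVec, Function.star_sumElim]
    simpa using add_nonneg (hA.dotProduct_mulVec_nonneg _) (hB.dotProduct_mulVec_nonneg _)

theorem PosSemidef.conjTranspose_mulVec_eq_zero_of_fromBlocks
    (h : (fromBlocks A C Cᴴ B).PosSemidef) {v : m → 𝕜} (hv : A *ᵥ v = 0) : Cᴴ *ᵥ v = 0 := by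
  have h0 := (h.dotProduct_mulVec_zero_iff (Sum.elim v 0)).mp (by
    simp [fromBlocks_mulVec, Function.star_sumElim, hv])
  simpa [fromBlocks_mulVec, hv] using congrArg (· ∘ Sum.inr) h0

theorem PosSemidef.mul_mul_eq_of_fromBlocks [DecidableEq m]
    (h : (fromBlocks A C Cᴴ B).PosSemidef) (hP : Pᴴ = P) (hAPA : A * P * A = A) :
    A * P * C = C := by
  have hCPA : Cᴴ * P * A = Cᴴ :=
    mul_mul_eq_of_mulVec_eq_zero hAPA fun _ => h.conjTranspose_mulVec_eq_zero_of_fromBlocks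
  simpa [Matrix.mul_assoc, h.of_fromBlocks₁₁.isHermitian.eq, hP] using congrArg (·ᴴ) hCPA

theorem posSemidef_fromBlocks_iff_schur [DecidableEq m] [DecidableEq n] (hA : A.IsHermitian)
    (hP : Pᴴ = P) (hAPC : A * P * C = C) :
    (fromBlocks A C Cᴴ B).PosSemidef ↔ A.PosSemidef ∧ (B - Cᴴ * P * C).PosSemidef := by
  let L : Matrix (m ⊕ n) (m ⊕ n) 𝕜 := fromBlocks 1 (-(P * C)) 0 1
  have hL : IsUnit L := isUnit_fromBlocks_zero₂₁.mpr ⟨isUnit_one, isUnit_one⟩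
  have hCPA : Cᴴ * P * A = Cᴴ := by
    simpa [Matrix.mul_assoc, hA.eq, hP] using congrArg (·ᴴ) hAPC
  have hconj : star L * fromBlocks A C Cᴴ B * L = fromBlocks A 0 0 (B - Cᴴ * P * C) := by
    simp [L, star_eq_conjTranspose, fromBlocks_conjTranspose, fromBlocks_multiply, hP,
      ← Matrix.mul_assoc, hAPC, hCPA, neg_add_eq_sub]
  rw [← hL.posSemidef_star_left_conjugate_iff, hconj, posSemidef_fromBlocks_zero_iff]

variable [DecidableEq m] [DecidableEq n] {G : Matrix m m 𝕜}

theorem PosSemidef.schur_complement₁₁ (h : (fromBlocks A C Cᴴ B).PosSemidef)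
    (hP : IsMoorePenroseInverse A P) : (B - Cᴴ * P * C).PosSemidef := by
  have hA := h.of_fromBlocks₁₁.isHermitian
  have hPh := hP.isHermitian hA
  exact ((posSemidef_fromBlocks_iff_schur hA hPh (h.mul_mul_eq_of_fromBlocks hPh hP.1)).mp h).2

theorem PosSemidef.fromBlocks_schur_complement₁₁
    (h : (fromBlocks A C Cᴴ B).PosSemidef) (hP : IsMoorePenroseInverse A P) :
    (fromBlocks A C Cᴴ (Cᴴ * P * C)).PosSemidef := by
  have hA := h.of_fromBlocks₁₁.isHermitian
  have hPh := hP.isHermitian hA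
  refine (posSemidef_fromBlocks_iff_schur hA hPh (h.mul_mul_eq_of_fromBlocks hPh hP.1)).mpr
    ⟨h.of_fromBlocks₁₁, ?_⟩
  rw [sub_self]
  exact .zero

theorem PosSemidef.fromBlocks_of_schur_complement₂₂_le {Q : Matrix n n 𝕜}
    (h : (fromBlocks A C Cᴴ B).PosSemidef) (hQ : IsMoorePenroseInverse B Q)
    (hG : (G - C * Q * Cᴴ).PosSemidef) : (fromBlocks G C Cᴴ B).PosSemidef := by
  have hB := h.of_fromBlocks₂₂
  have hQh := hQ.isHermitian hB.isHermitian
  have h' : (fromBlocks B Cᴴ Cᴴᴴ A).PosSemidef := by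
    rwa [conjTranspose_conjTranspose, ← posSemidef_fromBlocks_comm]
  have key := (posSemidef_fromBlocks_iff_schur (B := G) hB.isHermitian hQh
    (h'.mul_mul_eq_of_fromBlocks hQh hQ.1)).mpr ⟨hB, by rwa [conjTranspose_conjTranspose]⟩
  rw [conjTranspose_conjTranspose] at key
  exact posSemidef_fromBlocks_comm.mp key

end Blocks

section Complexification

variable {n : Type*} [Fintype n]

theorem map_ofReal_mul {l m : Type*} (A : Matrix l n ℝ) (B : Matrix n m ℝ) :
    (A * B).map Complex.ofReal = A.map Complex.ofReal * B.map Complex.ofReal :=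
  Matrix.map_mul (f := Complex.ofRealHom)

theorem map_ofReal_conjTranspose {l m : Type*} (A : Matrix l m ℝ) :
    (A.map Complex.ofReal)ᴴ = Aᵀ.map Complex.ofReal := by
  rw [← conjTranspose_map _ fun x => (Complex.conj_ofReal x).symm,
    conjTranspose_eq_transpose_of_trivial]

theorem IsMoorePenroseInverse.map_ofReal {m : Type*} [Fintype m] {A : Matrix m n ℝ}
    {B : Matrix n m ℝ} (h : IsMoorePenroseInverse A B) :
    IsMoorePenroseInverse (A.map Complex.ofReal) (B.map Complex.ofReal) := by
  obtain ⟨h₁, h₂, h₃, h₄⟩ := isMoorePenroseInverse_iff_transpose.mp h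
  refine ⟨?_, ?_, ?_, ?_⟩ <;>
    simp only [← map_ofReal_mul, map_ofReal_conjTranspose, h₁, h₂, h₃, h₄]

theorem posSemidef_map_ofReal_iff [DecidableEq n] {M : Matrix n n ℝ} :
    (M.map Complex.ofReal).PosSemidef ↔ M.PosSemidef := by
  refine ⟨fun h => .of_dotProduct_mulVec_nonneg ?_ fun v => ?_, fun h => ?_⟩
  · have h' := h.isHermitian.eq
    rw [map_ofReal_conjTranspose] at h'
    rw [IsHermitian, conjTranspose_eq_transpose_of_trivial]
    exact map_injective Complex.ofReal_injective h'
  · have h' := h.dotProduct_mulVec_nonneg (fun i => (v i : ℂ))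
    have hv : star (fun i => (v i : ℂ)) ⬝ᵥ M.map Complex.ofReal *ᵥ (fun i => (v i : ℂ)) =
        ((star v ⬝ᵥ M *ᵥ v : ℝ) : ℂ) := by
      simp [dotProduct, mulVec]
    rwa [hv, Complex.zero_le_real] at h'
  · open scoped MatrixOrder in
    obtain ⟨B, rfl⟩ := CStarAlgebra.nonneg_iff_eq_star_mul_self.mp h.nonneg
    rw [star_eq_conjTranspose, map_ofReal_mul, conjTranspose_eq_transpose_of_trivial,
      ← map_ofReal_conjTranspose]
    exact posSemidef_conjTranspose_mul_self _

open Complex in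
theorem PosSemidef.add_I_smul_of_fromBlocks {M K : Matrix n n ℂ}
    (h : (fromBlocks M K (-K) M).PosSemidef) : (M + I • K).PosSemidef := by
  let W : Matrix (n ⊕ n) n ℂ := fromRows 1 (I • 1)
  have hW : Wᴴ * fromBlocks M K (-K) M * W = (2 : ℝ) • (M + I • K) := by
    simp only [W, conjTranspose_fromRows_eq_fromCols_conjTranspose, conjTranspose_one,
      conjTranspose_smul, RCLike.star_def, conj_I, fromCols_mul_fromBlocks, fromCols_mul_fromRows,
      neg_smul, one_mul, mul_one, mul_neg, neg_mul, Algebra.smul_mul_assoc,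
      Algebra.mul_smul_comm]
    match_scalars <;> simp only [mul_one, mul_neg, I_mul_I] <;> ring
  have h2 := (h.conjTranspose_mul_mul_same W).smul (a := (2 : ℝ)⁻¹) (by norm_num)
  rwa [hW, inv_smul_smul₀ two_ne_zero] at h2

end Complexification

end Matrix

theorem pinvC_eq {k l : ℕ} {A : Matrix (Fin k) (Fin l) ℂ} {B : Matrix (Fin l) (Fin k) ℂ}
    (h : IsMoorePenroseInverse A B) : pinvC A = B := by
  have hex : ∃ B, IsMoorePenroseInverse A B := ⟨B, h⟩
  simp only [IsMoorePenroseInverse] at hex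
  rw [pinvC, dif_pos hex]
  exact IsMoorePenroseInverse.eq hex.choose_spec h

theorem pinvR_eq {k l : ℕ} {A : Matrix (Fin k) (Fin l) ℝ} {B : Matrix (Fin l) (Fin k) ℝ}
    (h : IsMoorePenroseInverse A B) : pinvR A = B := by
  have hex : ∃ B, IsMoorePenroseInverse A B := ⟨B, h⟩
  simp only [isMoorePenroseInverse_iff_transpose] at hex
  rw [pinvR, dif_pos hex]
  exact (isMoorePenroseInverse_iff_transpose.mpr hex.choose_spec).eq h

theorem toC_mul {a b c : ℕ} (A : Matrix (Fin a) (Fin b) ℝ) (B : Matrix (Fin b) (Fin c) ℝ) :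
    toC (A * B) = toC A * toC B :=
  map_ofReal_mul A B

theorem toC_sub {a b : ℕ} (A B : Matrix (Fin a) (Fin b) ℝ) : toC (A - B) = toC A - toC B :=
  Matrix.map_sub _ (fun _ _ => Complex.ofReal_sub _ _) A B

theorem conjTranspose_toC {a b : ℕ} (A : Matrix (Fin a) (Fin b) ℝ) : (toC A)ᴴ = toC Aᵀ :=
  map_ofReal_conjTranspose A

theorem IsCM2.posSemidef_fromBlocks {n m : ℕ} {A : Matrix (Fin (2*n)) (Fin (2*n)) ℝ}
    {B : Matrix (Fin (2*m)) (Fin (2*m)) ℝ} {C : Matrix (Fin (2*n)) (Fin (2*m)) ℝ}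
    (h : IsCM2 (fromBlocks A C Cᵀ B)) :
    (fromBlocks (toC A - Complex.I • toC (J n)) (toC C) (toC C)ᴴ
      (toC B - Complex.I • toC (J m))).PosSemidef := by
  convert h.2 using 1
  rw [conjTranspose_toC]
  ext (i | i) (j | j) <;> simp [toC]

theorem posSemidef_of_fromBlocks_reM_imM {k : ℕ} {Z : Matrix (Fin k) (Fin k) ℂ}
    (hZ : Z.IsHermitian) (h : (fromBlocks (reM Z) (imM Z) (imM Z)ᵀ (reM Z)).PosSemidef) :
    Z.PosSemidef := by
  have hK : (imM Z)ᵀ = -imM Z := by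
    ext i j
    simpa [imM] using (congrArg Complex.im (congrFun₂ hZ j i)).symm
  rw [hK, ← posSemidef_map_ofReal_iff, fromBlocks_map,
    Matrix.map_neg _ fun _ => Complex.ofReal_neg _] at h
  convert h.add_I_smul_of_fromBlocks using 1
  ext i j
  simp [reM, imM, Complex.ext_iff]

theorem posSemidef_toC_sub_Xmap {n m : ℕ} {A γ : Matrix (Fin (2*n)) (Fin (2*n)) ℝ}
    {B : Matrix (Fin (2*m)) (Fin (2*m)) ℝ} {C : Matrix (Fin (2*n)) (Fin (2*m)) ℝ}
    (hR : (A - γ).IsHermitian) (hX : (Xmap B C).IsHermitian)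
    (h : (fromBlocks (nextA A B C) (nextC B C) (nextC B C)ᵀ (nextA A B C)
      - fromBlocks γ 0 0 γ).PosSemidef) :
    (toC (A - γ) - Xmap B C).PosSemidef := by
  refine posSemidef_of_fromBlocks_reM_imM ?_ ?_
  · rw [IsHermitian, conjTranspose_sub, conjTranspose_toC, ← conjTranspose_eq_transpose_of_trivial,
      hR.eq, hX.eq]
  · convert h using 1
    ext (i | i) (j | j) <;> simp [nextA, nextC, reM, imM, toC] <;> ring

theorem IsCM2.posSemidef_fromBlocks_toC_sub {n m : ℕ} {A γ : Matrix (Fin (2*n)) (Fin (2*n)) ℝ}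
    {B : Matrix (Fin (2*m)) (Fin (2*m)) ℝ} {C : Matrix (Fin (2*n)) (Fin (2*m)) ℝ}
    (hCM : IsCM2 (fromBlocks A C Cᵀ B)) (hR : (A - γ).IsHermitian)
    (h : (fromBlocks (nextA A B C) (nextC B C) (nextC B C)ᵀ (nextA A B C)
      - fromBlocks γ 0 0 γ).PosSemidef) :
    (fromBlocks (toC (A - γ)) (toC C) (toC C)ᴴ (toC B - Complex.I • toC (J m))).PosSemidef := by
  have hfull := hCM.posSemidef_fromBlocks
  have hBh := hfull.of_fromBlocks₂₂.isHermitian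
  obtain ⟨P, hP⟩ := hBh.exists_isMoorePenroseInverse
  have hX : Xmap B C = toC C * P * (toC C)ᴴ := by
    rw [Xmap, pinvC_eq hP, conjTranspose_toC]
  have hXh : (Xmap B C).IsHermitian := by
    rw [hX, IsHermitian, conjTranspose_mul, conjTranspose_mul, conjTranspose_conjTranspose,
      (hP.isHermitian hBh).eq, Matrix.mul_assoc]
  exact hfull.fromBlocks_of_schur_complement₂₂_le hP (hX ▸ posSemidef_toC_sub_Xmap hR hXh h)

/-- Prop. 3: if `γ_{N+1} ≥ γ_A ⊕ γ_A` for a CM `γ_A`, then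
`γ_N ≥ γ_A ⊕ γ_B` where `γ_B = B_N − C_Nᵀ (A_N − γ_A)⁻ C_N` is itself a CM. -/
theorem prop3 {n m : ℕ} (AN : Matrix (Fin (2*n)) (Fin (2*n)) ℝ)
    (BN : Matrix (Fin (2*m)) (Fin (2*m)) ℝ) (CN : Matrix (Fin (2*n)) (Fin (2*m)) ℝ)
    (hCM : IsCM2 (Matrix.fromBlocks AN CN CNᵀ BN))
    (γA : Matrix (Fin (2*n)) (Fin (2*n)) ℝ) (hγA : IsCM γA)
    (hsep : (Matrix.fromBlocks (nextA AN BN CN) (nextC BN CN) (nextC BN CN)ᵀ (nextA AN BN CN)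
      - Matrix.fromBlocks γA 0 0 γA).PosSemidef) :
    IsCM (BN - CNᵀ * pinvR (AN - γA) * CN) ∧
    (Matrix.fromBlocks AN CN CNᵀ BN
      - Matrix.fromBlocks γA 0 0 (BN - CNᵀ * pinvR (AN - γA) * CN)).PosSemidef := by
  obtain ⟨hA, -, -, hB⟩ := isSymm_fromBlocks_iff.mp hCM.1
  have hR : (AN - γA).IsHermitian := by
    rw [IsHermitian, conjTranspose_eq_transpose_of_trivial, transpose_sub, hA, hγA.1]
  have hG := hCM.posSemidef_fromBlocks_toC_sub hR hsep
  obtain ⟨Q, hQ⟩ := hR.exists_isMoorePenroseInverse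
  have hQC : IsMoorePenroseInverse (toC (AN - γA)) (toC Q) := hQ.map_ofReal
  rw [pinvR_eq hQ]
  refine ⟨⟨?_, ?_⟩, ?_⟩
  · have hQs : Qᵀ = Q := by
      simpa only [conjTranspose_eq_transpose_of_trivial] using (hQ.isHermitian hR).eq
    rw [IsSymm, transpose_sub, transpose_mul, transpose_mul, transpose_transpose, hQs, hB.eq,
      Matrix.mul_assoc]
  · rw [toC_sub, toC_mul, toC_mul, sub_right_comm, ← conjTranspose_toC]
    exact hG.schur_complement₁₁ hQC
  · have hsplit : fromBlocks AN CN CNᵀ BN - fromBlocks γA 0 0 (BN - CNᵀ * Q * CN)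
        = fromBlocks (AN - γA) CN CNᵀ (CNᵀ * Q * CN) := by
      ext (i | i) (j | j) <;> simp
    have hG₂ := hG.fromBlocks_schur_complement₁₁ hQC
    rw [conjTranspose_toC, ← toC_mul, ← toC_mul] at hG₂
    rwa [hsplit, ← posSemidef_map_ofReal_iff, fromBlocks_map]
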